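/- PoT lower bound for atomic linear congestion games: for every k ≥ 1 there is a load-balancing game on a binary tree of depth k with 2-tribe partition and a tribal Nash equilibrium s^k with C(s^k) = 4k, while the profile where every player uses their lower node has cost k + 3; consequently the ratio C(s^k)/C(opt) ≥ 4k/(k+3), which tends to 4. -/

import Mathlib

/-!
When a member of a tribe `T` moves from node `u` to node `w` of a linear congestion game with
coefficients `α`, the tribal cost changes by `α w (n_T w + n w + 1) - α u (n_T u + n u - 1)`,
where `n` counts all players and `n_T` the members of `T`. In the all-upper profile the upper
endpoint `u` of an edge carries the edge and its sibling, exactly one of them in its tribe, so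
the loss is `2 α u`. Its lower endpoint `w` carries either its two child edges, one in the tribe,
for a gain of `4 α w = 2 α u`, or, at a leaf, nothing, for a gain of `α w = 2 α u`: no deviation
changes the tribal cost. Both total costs are `∑ α v n(v)²`, and every internal level of the
tree contributes `2^i (1/2)^i = 1` to `∑ α v`.
-/

open Finset Function

namespace CongestionGame

variable {V P : Type*} [DecidableEq V]

def load (choice : P → Bool → V) (b : P → Bool) (T : Finset P) (v : V) : ℕ :=
  #{q ∈ T | choice q (b q) = v}

theorem load_update [DecidableEq P] (choice : P → Bool → V) (b : P → Bool) {T : Finset P}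
    {p : P} (hp : p ∈ T) (x : Bool) (v : V) :
    (load choice (update b p x) T v : ℝ) =
      load choice b T v + (if choice p x = v then 1 else 0) -
        if choice p (b p) = v then 1 else 0 := by
  simp only [load, natCast_card_filter]
  rw [← add_sum_erase T _ hp, ← add_sum_erase T _ hp, update_self,
    sum_congr rfl fun q hq => by rw [update_of_ne (ne_of_mem_erase hq)]]
  ring

variable [Fintype P]

noncomputable def groupCost (α : V → ℝ) (choice : P → Bool → V) (b : P → Bool)
    (T : Finset P) : ℝ :=
  ∑ q ∈ T, α (choice q (b q)) * load choice b univ (choice q (b q))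

theorem groupCost_eq_sum_load [Fintype V] (α : V → ℝ) (choice : P → Bool → V) (b : P → Bool)
    (T : Finset P) :
    groupCost α choice b T = ∑ v, α v * load choice b T v * load choice b univ v := by
  rw [groupCost, ← sum_fiberwise' T (fun q => choice q (b q)) fun v => α v * load choice b univ v]
  refine sum_congr rfl fun v _ => ?_
  simp only [sum_const, nsmul_eq_mul, load]
  ring

theorem groupCost_update_sub [Fintype V] [DecidableEq P] (α : V → ℝ) (choice : P → Bool → V)
    (b : P → Bool) {T : Finset P} {p : P} (hp : p ∈ T) (x : Bool)
    (hx : choice p (b p) ≠ choice p x) :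
    groupCost α choice (update b p x) T - groupCost α choice b T =
      α (choice p x) * (load choice b T (choice p x) + load choice b univ (choice p x) + 1) -
      α (choice p (b p)) *
        (load choice b T (choice p (b p)) + load choice b univ (choice p (b p)) - 1) := by
  rw [groupCost_eq_sum_load, groupCost_eq_sum_load, ← sum_sub_distrib,
    Fintype.sum_eq_add (choice p x) (choice p (b p)) hx.symm]
  · simp only [load_update choice b hp, load_update choice b (mem_univ p), hx, hx.symm,
      ↓reduceIte]
    ring
  · rintro v ⟨hvw, hvu⟩
    simp only [load_update choice b hp, load_update choice b (mem_univ p), Ne.symm hvw,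
      Ne.symm hvu, ↓reduceIte]
    ring

end CongestionGame

theorem Finset.card_filter_coe_sort {α : Type*} (s : Finset α) (φ : α → Prop) [DecidablePred φ]
    [DecidablePred fun x : s => φ x] :
    #{x : s | φ x} = #{x ∈ s | φ x} := by
  rw [← card_map (Embedding.subtype (· ∈ s))]
  congr 1
  ext x
  simp [and_comm]

theorem Finset.sum_Ico_one_two_pow_log {M : Type*} [AddCommMonoid M] (f : ℕ → M) (k : ℕ) :
    ∑ v ∈ Ico 1 (2 ^ k), f (Nat.log 2 v) = ∑ i ∈ range k, 2 ^ i • f i := by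
  induction k with
  | zero => simp
  | succ k ih =>
    have hk : 2 ^ (k + 1) = 2 ^ k + 2 ^ k := by rw [pow_succ, mul_two]
    rw [← sum_Ico_consecutive _ Nat.one_le_two_pow (Nat.pow_le_pow_right two_pos k.le_succ),
      ih, sum_range_succ]
    congr 1
    rw [sum_congr rfl fun v hv => by
        rw [Nat.log_eq_of_pow_le_of_lt_pow (mem_Ico.1 hv).1 (mem_Ico.1 hv).2],
      sum_const, Nat.card_Ico, hk, Nat.add_sub_cancel]

namespace BinaryTreeGame

open CongestionGame

variable (k : ℕ)

/- Heap indexing: the root is `1` and the children of `v` are `2v` and `2v + 1`, so `v` has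
depth `Nat.log 2 v` and the leaves are `[2^k, 2^(k+1))`. An edge is identified with its lower
endpoint `p`; its upper endpoint is `p / 2`, and its tribe is the parity of `p`. -/
abbrev Node : Type := {v : ℕ // v ∈ Ico 1 (2 ^ (k + 1))}

abbrev Edge : Type := {p : ℕ // p ∈ Ico 2 (2 ^ (k + 1))}

noncomputable def coeff (v : ℕ) : ℝ :=
  if v < 2 ^ k then (1 / 2) ^ Nat.log 2 v else (1 / 2) ^ (k - 1) * 2

def endpoint : Edge k → Bool → Node k
  | p, true => ⟨p.1 / 2, by have := mem_Ico.1 p.2; simp only [mem_Ico]; omega⟩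
  | p, false => ⟨p.1, by have := mem_Ico.1 p.2; simp only [mem_Ico]; omega⟩

def tribe (p : Edge k) : Bool := decide (p.1 % 2 = 1)

noncomputable def cost (b : Edge k → Bool) (T : Finset (Edge k)) : ℝ :=
  groupCost (fun v : Node k => coeff k v) (endpoint k) b T

theorem coeff_nonneg (v : ℕ) : 0 ≤ coeff k v := by
  unfold coeff; split_ifs <;> positivity

theorem coeff_one (hk : 1 ≤ k) : coeff k 1 = 1 := by
  rw [coeff, if_pos (Nat.one_lt_two_pow_iff.2 (by omega)), Nat.log_one_right, pow_zero]

theorem coeff_div_two_of_lt {p : ℕ} (hp : 2 ≤ p) (hpk : p < 2 ^ k) :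
    coeff k (p / 2) = 2 * coeff k p := by
  have hlog : 1 ≤ Nat.log 2 p := Nat.log_pos one_lt_two hp
  rw [coeff, coeff, if_pos (by omega), if_pos hpk, Nat.log_div_base,
    ← Nat.sub_add_cancel hlog, pow_succ, Nat.add_sub_cancel]
  ring

theorem coeff_of_le {p : ℕ} (hkp : 2 ^ k ≤ p) (hp : p < 2 ^ (k + 1)) (hk : 1 ≤ k) :
    coeff k p = 2 * coeff k (p / 2) := by
  have hN : 2 ^ (k + 1) = 2 * 2 ^ k := pow_succ' 2 k
  have hk' : 2 ^ k = 2 * 2 ^ (k - 1) := by rw [← pow_succ', Nat.sub_add_cancel hk]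
  have hlog : Nat.log 2 (p / 2) = k - 1 :=
    Nat.log_eq_of_pow_le_of_lt_pow (by omega) (by rw [Nat.sub_add_cancel hk]; omega)
  rw [coeff, coeff, if_neg (by omega), if_pos (by omega), hlog]
  ring

theorem sum_coeff_internal : ∑ v ∈ Ico 1 (2 ^ k), coeff k v = k := by
  have h : ∀ v ∈ Ico 1 (2 ^ k), coeff k v = (1 / 2) ^ Nat.log 2 v :=
    fun v hv => if_pos (mem_Ico.1 hv).2
  rw [sum_congr rfl h, sum_Ico_one_two_pow_log]
  simp

theorem sum_coeff_leaves (hk : 1 ≤ k) : ∑ v ∈ Ico (2 ^ k) (2 ^ (k + 1)), coeff k v = 4 := by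
  have h : ∀ v ∈ Ico (2 ^ k) (2 ^ (k + 1)), coeff k v = (1 / 2) ^ (k - 1) * 2 :=
    fun v hv => if_neg (not_lt.2 (mem_Ico.1 hv).1)
  have hcard : 2 ^ (k + 1) - 2 ^ k = 2 ^ (k - 1) * 2 := by
    rw [pow_succ, ← Nat.sub_add_cancel hk, pow_succ, Nat.add_sub_cancel]
    omega
  rw [sum_congr rfl h, sum_const, Nat.card_Ico, hcard, nsmul_eq_mul]
  push_cast
  rw [mul_mul_mul_comm, ← mul_pow]
  norm_num

theorem sum_coeff (hk : 1 ≤ k) : ∑ v ∈ Ico 1 (2 ^ (k + 1)), coeff k v = k + 4 := by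
  rw [← sum_Ico_consecutive _ Nat.one_le_two_pow (Nat.pow_le_pow_right two_pos k.le_succ),
    sum_coeff_internal, sum_coeff_leaves k hk]

theorem load_up (v : Node k) :
    load (endpoint k) (fun _ => true) univ v = if v.1 < 2 ^ k then 2 else 0 := by
  have hv := mem_Ico.1 v.2
  have hN : 2 ^ (k + 1) = 2 * 2 ^ k := pow_succ' 2 k
  simp only [load, endpoint, Subtype.ext_iff]
  rw [card_filter_coe_sort _ fun q => q / 2 = v.1]
  split_ifs with h
  · rw [show {q ∈ Ico 2 (2 ^ (k + 1)) | q / 2 = v.1} = {2 * v.1, 2 * v.1 + 1} by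
      ext q; simp only [mem_filter, mem_Ico, mem_insert, mem_singleton]; omega]
    exact card_pair (by omega)
  · rw [card_eq_zero, filter_eq_empty_iff]
    intro q hq
    rw [mem_Ico] at hq
    omega

theorem load_up_tribe (p : Edge k) (v : Node k) :
    load (endpoint k) (fun _ => true) {q | tribe k q = tribe k p} v =
      if v.1 < 2 ^ k then 1 else 0 := by
  have hv := mem_Ico.1 v.2
  have hN : 2 ^ (k + 1) = 2 * 2 ^ k := pow_succ' 2 k
  simp only [load, endpoint, Subtype.ext_iff, filter_filter, tribe, decide_eq_decide]
  rw [card_filter_coe_sort _ fun q => (q % 2 = 1 ↔ p.1 % 2 = 1) ∧ q / 2 = v.1]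
  split_ifs with h
  · rw [show {q ∈ Ico 2 (2 ^ (k + 1)) | (q % 2 = 1 ↔ p.1 % 2 = 1) ∧ q / 2 = v.1} =
        {2 * v.1 + p.1 % 2} by
      ext q; simp only [mem_filter, mem_Ico, mem_singleton]; omega]
    exact card_singleton _
  · rw [card_eq_zero, filter_eq_empty_iff]
    intro q hq
    rw [mem_Ico] at hq
    omega

theorem load_down (v : Node k) :
    load (endpoint k) (fun _ => false) univ v = if 2 ≤ v.1 then 1 else 0 := by
  have hv := mem_Ico.1 v.2
  simp only [load, endpoint, Subtype.ext_iff]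
  rw [card_filter_coe_sort _ fun q => q = v.1, filter_eq', apply_ite card, card_singleton,
    card_empty]
  simp only [mem_Ico, hv.2, and_true]

theorem cost_up : cost k (fun _ => true) univ = 4 * k := by
  have hN : 2 ^ (k + 1) = 2 * 2 ^ k := pow_succ' 2 k
  calc cost k (fun _ => true) univ
      = ∑ v : Node k, if v.1 < 2 ^ k then 4 * coeff k v else 0 := by
        rw [cost, groupCost_eq_sum_load]
        refine sum_congr rfl fun v _ => ?_
        rw [load_up]
        split_ifs <;> push_cast <;> ring
    _ = ∑ v ∈ Ico 1 (2 ^ k), 4 * coeff k v := by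
        rw [sum_coe_sort (Ico 1 _) fun v => if v < 2 ^ k then 4 * coeff k v else 0, ← sum_filter]
        congr 1
        ext v
        simp only [mem_filter, mem_Ico]
        omega
    _ = 4 * k := by rw [← mul_sum, sum_coeff_internal]

theorem cost_down (hk : 1 ≤ k) : cost k (fun _ => false) univ = k + 3 := by
  calc cost k (fun _ => false) univ
      = ∑ v : Node k, if 2 ≤ v.1 then coeff k v else 0 := by
        rw [cost, groupCost_eq_sum_load]
        refine sum_congr rfl fun v _ => ?_
        rw [load_down]
        split_ifs <;> simp
    _ = ∑ v ∈ Ico 2 (2 ^ (k + 1)), coeff k v := by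
        rw [sum_coe_sort (Ico 1 _) fun v => if 2 ≤ v then coeff k v else 0, ← sum_filter]
        congr 1
        ext v
        simp only [mem_filter, mem_Ico]
        omega
    _ = k + 3 := by
        have h := sum_eq_sum_Ico_succ_bot (Nat.one_lt_two_pow k.succ_ne_zero) (coeff k)
        rw [sum_coeff k hk, coeff_one k hk] at h
        linarith

theorem cost_up_le_update (hk : 1 ≤ k) (p : Edge k) :
    cost k (fun _ => true) {q | tribe k q = tribe k p} ≤
      cost k (update (fun _ => true) p false) {q | tribe k q = tribe k p} := by
  have hp := mem_Ico.1 p.2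
  have hN : 2 ^ (k + 1) = 2 * 2 ^ k := pow_succ' 2 k
  have hne : endpoint k p true ≠ endpoint k p false := by
    simp only [endpoint, ne_eq, Subtype.mk.injEq]
    omega
  rw [← sub_nonneg, cost, cost, groupCost_update_sub (T := {q | tribe k q = tribe k p}) _ _ _
    (mem_filter.2 ⟨mem_univ p, rfl⟩) false hne]
  simp only [load_up, load_up_tribe, endpoint, if_pos (show p.1 / 2 < 2 ^ k by omega)]
  split_ifs with h
  · rw [coeff_div_two_of_lt k hp.1 h]
    norm_num
    linarith
  · rw [coeff_of_le k (not_lt.1 h) hp.2 hk]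
    norm_num
    linarith

end BinaryTreeGame

open BinaryTreeGame CongestionGame in
/-- PoT lower bound for atomic linear congestion games: for every k ≥ 1 there
is a load-balancing game (each player chooses one of two nodes with linear
costs) with a 2-tribe partition and a tribal Nash equilibrium of total cost
4k, while some profile has total cost k + 3; hence the ratio is 4k/(k+3). -/
theorem stmt_17 (k : ℕ) (hk : 1 ≤ k) :
    ∃ (V P : Type) (_ : Fintype V) (_ : Fintype P) (_ : DecidableEq V) (_ : DecidableEq P)
      (α : V → ℝ)                      -- linear cost coefficients of the nodes
      (choice : P → Bool → V)          -- each player picks one of two nodes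
      (τ : P → Bool)                   -- a partition into two tribes
      (n : V → (P → Bool) → ℕ)         -- congestion
      (c : P → (P → Bool) → ℝ)         -- player costs
      (cτ : P → (P → Bool) → ℝ)        -- tribal costs
      (C : (P → Bool) → ℝ)             -- total cost
      (s slow : P → Bool),             -- the equilibrium and the cheap profile
      (∀ v, 0 ≤ α v) ∧
      (∀ v b, n v b = (univ.filter (fun p : P => choice p (b p) = v)).card) ∧
      (∀ p b, c p b = α (choice p (b p)) * (n (choice p (b p)) b : ℝ)) ∧
      (∀ p b, cτ p b = ∑ q ∈ univ.filter (fun q : P => τ q = τ p), c q b) ∧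
      (∀ b, C b = ∑ p, c p b) ∧
      -- s is a tribal Nash equilibrium (flipping is the only deviation)
      (∀ p : P, cτ p s ≤ cτ p (Function.update s p (!s p))) ∧
      C s = 4 * (k : ℝ) ∧
      C slow = (k : ℝ) + 3 ∧
      C s / C slow = 4 * (k : ℝ) / ((k : ℝ) + 3) := by
  let α : Node k → ℝ := fun v => coeff k v
  refine ⟨Node k, Edge k, inferInstance, inferInstance, inferInstance, inferInstance, α,
    endpoint k, tribe k, fun v b => load (endpoint k) b univ v,
    fun p b => α (endpoint k p (b p)) * load (endpoint k) b univ (endpoint k p (b p)),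
    fun p b => cost k b {q | tribe k q = tribe k p}, fun b => cost k b univ,
    fun _ => true, fun _ => false,
    fun v => coeff_nonneg k v, fun _ _ => rfl, fun _ _ => rfl, fun _ _ => rfl, fun _ => rfl,
    cost_up_le_update k hk, cost_up k, cost_down k hk,
    congrArg₂ (· / ·) (cost_up k) (cost_down k hk)⟩
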